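/- Let n ≥ 1 and let f_n(x) = ∑_{k=0}^{n} (n!/k!)·x^k. Then the absolute value of the discriminant of f_n is (n!)^n. -/

import Mathlib

open Polynomial NumberField

/-- The monic integer polynomial `n!` times the `n`-th Taylor polynomial of `exp`:
`f_n(x) = ∑_(k=0)^(n) (n!/k!) x^k`. -/
noncomputable def fInt (n : ℕ) : Polynomial ℤ :=
  ∑ k ∈ Finset.range (n + 1), C ((n.factorial / k.factorial : ℕ) : ℤ) * X ^ k

/-- The index `[ℤ_K : ℤ[θ]]` of the order `ℤ[θ]` in the ring of integers of `K`. -/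
noncomputable def subIdx {K : Type*} [Field K] [NumberField K] (θ : 𝓞 K) : ℕ :=
  (Subalgebra.toSubmodule (Algebra.adjoin ℤ ({θ} : Set (𝓞 K)))).toAddSubgroup.index

/-- The discriminant of a polynomial over `ℚ`, via the product of squared differences of
its complex roots (monic convention). -/
noncomputable def polyDisc (f : Polynomial ℚ) : ℂ :=
  let l := ((f.map (algebraMap ℚ ℂ)).roots).toList
  ∏ q ∈ (Finset.range l.length ×ˢ Finset.range l.length).filter (fun q => q.1 < q.2),
    (l.getD q.1 0 - l.getD q.2 0) ^ 2

/-!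
For a monic `f` with complex roots `r₁, …, rₙ`, `|disc f| = ∏ᵢ ∏_{j ≠ i} |rᵢ - rⱼ| = ∏ᵢ |f'(rᵢ)|`.
The recursion `f_{n+1} = (n+1) f_n + X^{n+1}` gives `f_n' = f_n - Xⁿ`, so `f_n'(r) = -rⁿ` at
each root, and hence `|disc f_n| = |∏ᵢ rᵢ|ⁿ = |f_n(0)|ⁿ = (n!)ⁿ`.
-/

open Finset

lemma fInt_zero : fInt 0 = 1 := by
  simp [fInt]

lemma fInt_succ (n : ℕ) : fInt (n + 1) = C ((n + 1 : ℕ) : ℤ) * fInt n + X ^ (n + 1) := by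
  rw [fInt, sum_range_succ, Nat.div_self (Nat.factorial_pos _), fInt, mul_sum]
  congr 1
  · refine sum_congr rfl fun k hk => ?_
    rw [Nat.factorial_succ, Nat.mul_div_assoc _
      (Nat.factorial_dvd_factorial (Nat.lt_succ_iff.mp (mem_range.mp hk))), ← mul_assoc, ← C_mul]
    push_cast
    rfl
  · simp

lemma natDegree_fInt (n : ℕ) : (fInt n).natDegree = n := by
  induction n with
  | zero => simp [fInt_zero]
  | succ n ih =>
    rw [fInt_succ, natDegree_add_eq_right_of_natDegree_lt] <;>
      simp only [natDegree_X_pow]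
    exact (natDegree_C_mul_le _ _).trans_lt (by omega)

lemma fInt_monic (n : ℕ) : (fInt n).Monic := by
  cases n with
  | zero => simp [fInt_zero]
  | succ n =>
    rw [Monic, leadingCoeff, natDegree_fInt, fInt_succ, coeff_add, coeff_C_mul, coeff_X_pow_self,
      coeff_eq_zero_of_natDegree_lt (by rw [natDegree_fInt]; omega), mul_zero, zero_add]

lemma derivative_fInt (n : ℕ) : derivative (fInt n) = fInt n - X ^ n := by
  induction n with
  | zero => simp [fInt_zero]
  | succ n ih =>
    rw [fInt_succ, derivative_add, derivative_C_mul, ih, derivative_X_pow]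
    push_cast
    ring

lemma eval_zero_fInt (n : ℕ) : (fInt n).eval 0 = n.factorial := by
  induction n with
  | zero => simp [fInt_zero]
  | succ n ih => simp [fInt_succ, ih, Nat.factorial_succ]

lemma List.prod_map_eq_prod_range_getD {α M : Type*} [CommMonoid M] (l : List α) (d : α)
    (f : α → M) : (l.map f).prod = ∏ i ∈ Finset.range l.length, f (l.getD i d) := by
  rw [← Fin.prod_univ_fun_getElem, ← Fin.prod_univ_eq_prod_range]
  exact Fintype.prod_congr _ _ fun i => by rw [List.getD_eq_getElem _ _ i.2]

lemma eval_derivative_prod_X_sub_C {R ι : Type*} [CommRing R] [DecidableEq ι] {s : Finset ι}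
    (a : ι → R) {i : ι} (hi : i ∈ s) :
    (derivative (∏ j ∈ s, (X - C (a j)))).eval (a i) = ∏ j ∈ s.erase i, (a i - a j) := by
  rw [← mul_prod_erase s _ hi, derivative_mul]
  simp [eval_prod]

lemma Finset.prod_filter_lt_sq {ι M : Type*} [LinearOrder ι] [CommMonoid M] (s : Finset ι)
    (g : ι → ι → M) (hg : ∀ i j, g i j = g j i) :
    (∏ q ∈ (s ×ˢ s).filter (fun q => q.1 < q.2), g q.1 q.2) ^ 2
      = ∏ i ∈ s, ∏ j ∈ s.erase i, g i j := by
  have hswap : ∏ q ∈ (s ×ˢ s).filter (fun q => q.1 < q.2), g q.1 q.2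
      = ∏ q ∈ (s ×ˢ s).filter (fun q => q.2 < q.1), g q.1 q.2 :=
    prod_nbij' Prod.swap Prod.swap (by simp +contextual) (by simp +contextual) (by simp) (by simp)
      fun q _ => hg _ _
  rw [sq]
  nth_rewrite 2 [hswap]
  rw [← prod_union (disjoint_filter.mpr fun q _ h h' => lt_asymm h h'), ← filter_or,
    prod_filter, prod_product]
  refine prod_congr rfl fun i _ => ?_
  rw [← prod_filter]
  congr 1
  ext j
  simp [ne_comm, and_comm]

lemma norm_polyDisc_of_monic (f : ℚ[X]) (hf : f.Monic) :
    ‖polyDisc f‖ = ((f.map (algebraMap ℚ ℂ)).roots.map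
      fun r => ‖(derivative (f.map (algebraMap ℚ ℂ))).eval r‖).prod := by
  set g := f.map (algebraMap ℚ ℂ)
  set l := g.roots.toList
  set a : ℕ → ℂ := fun i => l.getD i 0
  have hg : g = ∏ i ∈ range l.length, (X - C (a i)) := by
    conv_lhs => rw [(IsAlgClosed.splits g).eq_prod_roots_of_monic (hf.map _)]
    rw [← Multiset.prod_map_toList, List.prod_map_eq_prod_range_getD _ 0]
  have hdisc : polyDisc f
      = ∏ q ∈ (range l.length ×ˢ range l.length).filter (fun q => q.1 < q.2),
        (a q.1 - a q.2) ^ 2 := rfl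
  rw [hdisc, norm_prod, ← Multiset.prod_map_toList, List.prod_map_eq_prod_range_getD _ 0]
  simp_rw [norm_pow]
  rw [prod_pow, prod_filter_lt_sq _ (fun i j => ‖a i - a j‖) fun i j => norm_sub_rev _ _]
  refine prod_congr rfl fun i hi => ?_
  change _ = ‖(derivative g).eval (a i)‖
  rw [hg, eval_derivative_prod_X_sub_C a hi, norm_prod]

theorem abs_disc_fInt_general (n : ℕ) :
    ‖polyDisc ((fInt n).map (Int.castRingHom ℚ))‖ = (n.factorial : ℝ) ^ n := by
  set g := (fInt n).map (Int.castRingHom ℂ)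
  have hg : ((fInt n).map (Int.castRingHom ℚ)).map (algebraMap ℚ ℂ) = g := by
    rw [Polynomial.map_map]
    congr 1
  have hmonic : g.Monic := (fInt_monic n).map _
  have hderiv : ∀ r ∈ g.roots, ‖(derivative g).eval r‖ = ‖r‖ ^ n := fun r hr => by
    rw [show derivative g = g - X ^ n by simp [g, derivative_map, derivative_fInt], eval_sub,
      (isRoot_of_mem_roots hr).eq_zero]
    simp
  rw [norm_polyDisc_of_monic _ ((fInt_monic n).map _), hg, Multiset.map_congr rfl hderiv,
    Multiset.prod_map_pow]
  calc (g.roots.map (‖·‖)).prod ^ n = ‖(g.roots.map (0 - ·)).prod‖ ^ n := by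
        rw [← normHom_apply, map_multiset_prod (normHom (α := ℂ))]
        simp
    _ = ‖g.eval 0‖ ^ n := by rw [(IsAlgClosed.splits g).eval_eq_prod_roots_of_monic hmonic]
    _ = (n.factorial : ℝ) ^ n := by simp [g, eval_zero_map, eval_zero_fInt]

/-- The absolute value of the discriminant of `f_n` is `(n!)^n`. -/
theorem abs_disc_fInt (n : ℕ) (hn : 0 < n) :
    ‖polyDisc ((fInt n).map (Int.castRingHom ℚ))‖ = (n.factorial : ℝ) ^ n :=
  abs_disc_fInt_general n
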